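/- arXiv:2301.13321 — 2 statements merged into one kernel-verified Lean document; each statement's English description precedes it below -/
import Mathlib

section
/- Let v₀, v₁ be independent Uniform[0,1] and let r ∈ [0, 1/2]. If bidder 1 tips t(v₁) = v₁/2 − r for v₁ > 2r (else 0), and bidder 0 wins iff v₀ ≥ t(v₁) + r, then the seller's expected revenue equals r·(1 − r²), which equals the expected revenue of posting a take-it-or-leave-it price r to two independent Uniform[0,1] buyers. -/
/-!
A bidder with `v₁ < r` lies below the tipping threshold `2r` and tips nothing, so with tipping
the sale occurs exactly when some value reaches `r`, as under the posted price. That event is the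
unit square minus `[0, r)²`, of area `1 - r²`, and the seller collects `r` on it.
-/

open MeasureTheory Set

lemma setOf_le_or_le_inter_unitSquare (r : ℝ) :
    {p : ℝ × ℝ | r ≤ p.1 ∨ r ≤ p.2} ∩ Icc (0:ℝ) 1 ×ˢ Icc (0:ℝ) 1 =
      Icc (0:ℝ) 1 ×ˢ Icc (0:ℝ) 1 \ Ico 0 r ×ˢ Ico 0 r := by
  ext ⟨x, y⟩
  simp only [mem_inter_iff, mem_sdiff, mem_ofPred_eq, mem_prod, mem_Icc, mem_Ico]
  constructor
  · rintro ⟨h, hsq⟩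
    refine ⟨hsq, ?_⟩
    rintro ⟨⟨-, hx⟩, -, hy⟩
    rcases h with h | h <;> linarith
  · rintro ⟨hsq, hn⟩
    refine ⟨?_, hsq⟩
    by_contra! hc
    exact hn ⟨⟨hsq.1.1, hc.1⟩, hsq.2.1, hc.2⟩

lemma volume_real_unitSquare_sdiff_square {r : ℝ} (h0 : 0 ≤ r) (h1 : r ≤ 1) :
    volume.real (Icc (0:ℝ) 1 ×ˢ Icc (0:ℝ) 1 \ Ico 0 r ×ˢ Ico 0 r) = 1 - r ^ 2 := by
  have hIco : Ico (0:ℝ) r ⊆ Icc 0 1 := Ico_subset_Icc_self.trans (Icc_subset_Icc_right h1)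
  rw [measureReal_sdiff (prod_mono hIco hIco) (measurableSet_Ico.prod measurableSet_Ico)
      (isCompact_Icc.prod isCompact_Icc).measure_lt_top.ne,
    Measure.volume_eq_prod, measureReal_prod_prod, measureReal_prod_prod]
  simp [h0]
  ring

lemma integral_posted_price {r : ℝ} (h0 : 0 ≤ r) (h1 : r ≤ 1) :
    ∫ p in Icc (0:ℝ) 1 ×ˢ Icc (0:ℝ) 1, (if r ≤ p.1 ∨ r ≤ p.2 then r else 0) =
      r * (1 - r ^ 2) := by
  have hS : MeasurableSet {p : ℝ × ℝ | r ≤ p.1 ∨ r ≤ p.2} :=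
    (measurableSet_le measurable_const measurable_fst).union
      (measurableSet_le measurable_const measurable_snd)
  have hind : {p : ℝ × ℝ | r ≤ p.1 ∨ r ≤ p.2}.indicator (fun _ => r) =
      fun p => if r ≤ p.1 ∨ r ≤ p.2 then r else 0 := by
    ext p
    simp only [indicator_apply, mem_ofPred_eq]
  rw [← hind, integral_indicator_const r hS, measureReal_restrict_apply hS,
    setOf_le_or_le_inter_unitSquare, volume_real_unitSquare_sdiff_square h0 h1, smul_eq_mul,
    mul_comm]

lemma tip_add_le_or_le_iff {t r x v : ℝ} (ht : v < r → t = 0) :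
    t + r ≤ x ∨ r ≤ v ↔ r ≤ x ∨ r ≤ v := by
  rcases le_or_gt r v with hv | hv
  · exact iff_of_true (Or.inr hv) (Or.inr hv)
  · rw [ht hv, zero_add]

/-- Corollary 5.2 (revenue): with reserve price `r ∈ [0,1/2]`, tip `t(v₁) = v₁/2 − r`
for `v₁ > 2r` (else 0), and bidder 0 winning iff `v₀ ≥ t(v₁) + r`, the seller's expected
revenue (the winner pays exactly `r` whenever a sale occurs) equals `r·(1 − r²)`,
which equals the expected revenue of posting a take-it-or-leave-it price `r`. -/
theorem seller_revenue_equals_posted_price (r : ℝ) (hr : r ∈ Set.Icc (0:ℝ) (1/2))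
    (t : ℝ → ℝ) (ht : ∀ v, t v = if 2 * r < v then v / 2 - r else 0) :
    (∫ p in (Icc (0:ℝ) 1 ×ˢ Icc (0:ℝ) 1),
        (if t p.2 + r ≤ p.1 ∨ r ≤ p.2 then r else 0)) = r * (1 - r ^ 2) ∧
    (∫ p in (Icc (0:ℝ) 1 ×ˢ Icc (0:ℝ) 1),
        (if r ≤ p.1 ∨ r ≤ p.2 then r else 0)) = r * (1 - r ^ 2) := by
  obtain ⟨h0, h_half⟩ := hr
  have hposted := integral_posted_price h0 (by linarith)
  have hwin (x v : ℝ) : t v + r ≤ x ∨ r ≤ v ↔ r ≤ x ∨ r ≤ v :=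
    tip_add_le_or_le_iff fun hv => by rw [ht, if_neg (by linarith)]
  refine ⟨?_, hposted⟩
  simpa only [hwin] using hposted
end

section
/- Let n ≥ 2, and define t(v) = (1/(2n))·(vⁿ − v̲ⁿ) for v ≥ v̲ and t(v) = 0 otherwise, where v̲ ∈ (0,1) solves (n+1)·v̲ⁿ/(n(n−1)) − v̲^(n+1)/(n+1) − 1/(n(n+1)) = 0. Then: (a) t(v) ≤ v/n for all v ∈ [0,1]; (b) if V ~ Uniform[0,1], then E[t(V)] = v̲ⁿ/(n(n−1)). -/
open MeasureTheory Set

/-! The tip vanishes below `v̲` and is at most `vⁿ/(2n) ≤ v/n` above it. Its mean is the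
elementary integral `∫_{v̲}^1 (vⁿ - v̲ⁿ)/(2n) dv`, a polynomial in `v̲`; the equation defining `v̲`
is precisely what reduces that polynomial to `v̲ⁿ/(n(n-1))`. -/

noncomputable def equilibriumTip (n : ℕ) (vbar v : ℝ) : ℝ :=
  if vbar ≤ v then (1 / (2 * n)) * (v ^ n - vbar ^ n) else 0

lemma equilibriumTip_eq_max (n : ℕ) (vbar v : ℝ) :
    equilibriumTip n vbar v = (1 / (2 * n)) * (max v vbar ^ n - vbar ^ n) := by
  unfold equilibriumTip
  split_ifs with h
  · rw [max_eq_left h]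
  · rw [max_eq_right (le_of_not_ge h), sub_self, mul_zero]

lemma continuous_equilibriumTip (n : ℕ) (vbar : ℝ) : Continuous (equilibriumTip n vbar) := by
  simp only [funext (equilibriumTip_eq_max n vbar)]
  fun_prop

lemma equilibriumTip_le_div {n : ℕ} {vbar v : ℝ} (hn : n ≠ 0) (hvbar : 0 ≤ vbar) (hv0 : 0 ≤ v)
    (hv1 : v ≤ 1) :
    equilibriumTip n vbar v ≤ v / n := by
  unfold equilibriumTip
  split_ifs
  · have hvn : v ^ n ≤ v := pow_le_of_le_one hv0 hv1 hn
    have hbn : 0 ≤ vbar ^ n := by positivity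
    have hn1 : (1 : ℝ) ≤ n := by exact_mod_cast Nat.one_le_iff_ne_zero.mpr hn
    calc (1 / (2 * n)) * (v ^ n - vbar ^ n) ≤ (1 / (2 * n)) * v := by gcongr; linarith
      _ = v / (2 * n) := by ring
      _ ≤ v / n := by gcongr; linarith
  · positivity

lemma integral_equilibriumTip {n : ℕ} {vbar : ℝ} (hvbar0 : 0 ≤ vbar) (hvbar1 : vbar ≤ 1) :
    ∫ v in (0 : ℝ)..1, equilibriumTip n vbar v
      = (1 / (2 * n)) * ((1 - vbar ^ (n + 1)) / (n + 1) - (vbar ^ n - vbar ^ (n + 1))) := by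
  have hc := continuous_equilibriumTip n vbar
  rw [← intervalIntegral.integral_add_adjacent_intervals (b := vbar)
    (hc.intervalIntegrable _ _) (hc.intervalIntegrable _ _)]
  have below : ∫ v in (0 : ℝ)..vbar, equilibriumTip n vbar v = 0 := by
    rw [intervalIntegral.integral_congr (g := fun _ => 0), intervalIntegral.integral_zero]
    intro v hv
    rw [uIcc_of_le hvbar0] at hv
    simp only [equilibriumTip_eq_max, max_eq_right hv.2, sub_self, mul_zero]
  have above : ∫ v in vbar..(1 : ℝ), equilibriumTip n vbar v
      = ∫ v in vbar..(1 : ℝ), (1 / (2 * n)) * (v ^ n - vbar ^ n) := by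
    refine intervalIntegral.integral_congr fun v hv => ?_
    rw [uIcc_of_le hvbar1] at hv
    exact if_pos hv.1
  rw [below, above, zero_add, intervalIntegral.integral_const_mul,
    intervalIntegral.integral_sub (intervalIntegral.intervalIntegrable_pow n)
      intervalIntegrable_const, integral_pow, intervalIntegral.integral_const, smul_eq_mul]
  ring

/-- The algebra behind the mean of the tip, with `m = n`, `x = v̲ⁿ` and `y = v̲ⁿ⁺¹`. -/
lemma mean_eq_of_root_equation {m x y : ℝ} (hm0 : m ≠ 0) (hm1 : m - 1 ≠ 0) (hm2 : m + 1 ≠ 0)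
    (hroot : (m + 1) * x / (m * (m - 1)) - y / (m + 1) - 1 / (m * (m + 1)) = 0) :
    (1 / (2 * m)) * ((1 - y) / (m + 1) - (x - y)) = x / (m * (m - 1)) := by
  field_simp at hroot ⊢
  linear_combination (-1 : ℝ) * hroot

/-- Proposition 5.3: the symmetric equilibrium tipping function
`t(v) = (1/(2n))(vⁿ − v̲ⁿ)` for `v ≥ v̲` (else 0) satisfies `t(v) ≤ v/n` on `[0,1]`,
and its mean under `Uniform[0,1]` equals `v̲ⁿ/(n(n−1))`. -/
theorem equilibrium_tip_properties (n : ℕ) (hn : 2 ≤ n) (vbar : ℝ)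
    (hvbar : vbar ∈ Set.Ioo (0:ℝ) 1)
    (hroot : (n + 1) * vbar ^ n / (n * (n - 1)) - vbar ^ (n + 1) / (n + 1)
      - 1 / (n * (n + 1)) = 0)
    (t : ℝ → ℝ)
    (ht : ∀ v, t v = if vbar ≤ v then (1 / (2 * n)) * (v ^ n - vbar ^ n) else 0) :
    (∀ v ∈ Set.Icc (0:ℝ) 1, t v ≤ v / n) ∧
    (∫ v in Icc (0:ℝ) 1, t v) = vbar ^ n / (n * (n - 1)) := by
  obtain rfl : t = equilibriumTip n vbar := funext ht
  have hnR : (2 : ℝ) ≤ n := by exact_mod_cast hn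
  refine ⟨fun v hv => equilibriumTip_le_div (by omega) hvbar.1.le hv.1 hv.2, ?_⟩
  rw [integral_Icc_eq_integral_Ioc, ← intervalIntegral.integral_of_le zero_le_one,
    integral_equilibriumTip hvbar.1.le hvbar.2.le]
  exact mean_eq_of_root_equation (by linarith) (by linarith) (by linarith) hroot
end
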